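/- Let N ≥ 1, let x_1, …, x_{N+1} ∈ ℝ^N be affinely independent, fix α ≥ 0 and A* > 0, let y* lie in the open convex hull co{x_1,…,x_{N+1}}, and set s_i = A* e^{−α‖x_i − y*‖}/‖x_i − y*‖² (noise-free measurements). Define L(A, y) = Σ_{i=1}^{N+1} (s_i log z_i(A, y) − z_i(A, y)) with z_i(A, y) = A e^{−α‖x_i − y‖}/‖x_i − y‖². If y lies in the open convex hull, A > 0, and L(A, y) = L(A*, y*), then y = y* and A = A*; that is, (A*, y*) is the unique global maximizer of L over (0,∞) × co{x_1,…,x_{N+1}}. -/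

import Mathlib

/-!
Since `s log z - z ≤ s log s - s` for positive `s, z`, with equality only at `z = s`
(the gap is `z · klFun (s / z)`), the likelihood is maximal exactly when every modelled
measurement reproduces the noise-free one: `A φ(‖xᵢ - y‖) = A* φ(‖xᵢ - y*‖)` with
`φ r = e^{-α r} / r²` strictly decreasing. If, say, `A ≥ A*`, then `y*` is at least as close
as `y` to every sensor; the points closer to `y*` than to `y` form a half-space, which then
contains the sensors, hence their convex hull, hence `y`, forcing `y = y*` and then `A = A*`.
-/

open Real Finset InformationTheory

theorem mul_log_self_sub_sub_mul_log_sub {s z : ℝ} (hs : 0 < s) (hz : 0 < z) :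
    (s * log s - s) - (s * log z - z) = z * klFun (s / z) := by
  rw [klFun, log_div hs.ne' hz.ne']
  field_simp
  ring

theorem mul_log_sub_le_mul_log_self_sub {s z : ℝ} (hs : 0 < s) (hz : 0 < z) :
    s * log z - z ≤ s * log s - s := by
  rw [← sub_nonneg, mul_log_self_sub_sub_mul_log_sub hs hz]
  exact mul_nonneg hz.le (klFun_nonneg (div_pos hs hz).le)

theorem mul_log_sub_eq_mul_log_self_sub_iff {s z : ℝ} (hs : 0 < s) (hz : 0 < z) :
    s * log z - z = s * log s - s ↔ z = s := by
  rw [eq_comm, ← sub_eq_zero, mul_log_self_sub_sub_mul_log_sub hs hz,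
    mul_eq_zero, or_iff_right hz.ne', klFun_eq_zero_iff (div_pos hs hz).le,
    div_eq_one_iff_eq hz.ne', eq_comm]

section Euclidean

variable {E : Type*} [NormedAddCommGroup E] [InnerProductSpace ℝ E]

theorem convex_setOf_norm_sub_le_norm_sub (a b : E) :
    Convex ℝ {p : E | ‖p - a‖ ≤ ‖p - b‖} := by
  have hlin : IsLinearMap ℝ fun p : E => inner ℝ p (b - a) :=
    ⟨fun u v => inner_add_left u v _, fun c u => real_inner_smul_left u _ c⟩
  convert convex_halfSpace_le hlin ((‖b‖ ^ 2 - ‖a‖ ^ 2) / 2) using 1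
  ext p
  simp only [Set.mem_ofPred_eq]
  rw [← pow_le_pow_iff_left₀ (norm_nonneg _) (norm_nonneg _) two_ne_zero,
    norm_sub_sq_real, norm_sub_sq_real, inner_sub_right]
  constructor <;> intro h <;> linarith

theorem eq_of_forall_norm_sub_le_of_mem_convexHull {X : Set E} {a b : E}
    (hX : ∀ p ∈ X, ‖p - a‖ ≤ ‖p - b‖) (hb : b ∈ convexHull ℝ X) : b = a := by
  have : ‖b - a‖ ≤ ‖b - b‖ := convexHull_min hX (convex_setOf_norm_sub_le_norm_sub a b) hb
  rwa [sub_self, norm_zero, norm_le_zero_iff, sub_eq_zero] at this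

theorem eq_and_eq_of_forall_mul_apply_norm_sub_eq {ι : Type*} {f : ℝ → ℝ}
    (hf : StrictAntiOn f (Set.Ioi 0)) (hf_pos : ∀ r, 0 < r → 0 < f r) {x : ι → E} {y y' : E}
    (hy : y ∈ convexHull ℝ (Set.range x)) (hy' : y' ∈ convexHull ℝ (Set.range x))
    (hr : ∀ i, 0 < ‖x i - y‖) (hr' : ∀ i, 0 < ‖x i - y'‖) {A A' : ℝ} (hA : 0 < A) (hA' : 0 < A')
    (h : ∀ i, A * f ‖x i - y‖ = A' * f ‖x i - y'‖) : y = y' ∧ A = A' := by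
  wlog hle : A' ≤ A generalizing A A' y y'
  · obtain ⟨hyy, hAA⟩ := this hy' hy hr' hr hA' hA (fun i => (h i).symm) (le_of_not_ge hle)
    exact ⟨hyy.symm, hAA.symm⟩
  -- A source at least as strong must be at least as far from every sensor.
  have hfar : ∀ i, ‖x i - y'‖ ≤ ‖x i - y‖ := fun i => by
    rw [← hf.le_iff_ge (hr i) (hr' i), ← mul_le_mul_iff_right₀ hA, h i]
    exact mul_le_mul_of_nonneg_right hle (hf_pos _ (hr' i)).le
  have hyy : y = y' :=
    eq_of_forall_norm_sub_le_of_mem_convexHull (by rintro _ ⟨i, rfl⟩; exact hfar i) hy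
  obtain ⟨_, i, rfl⟩ := convexHull_nonempty_iff.mp ⟨y, hy⟩
  refine ⟨hyy, mul_right_cancel₀ (hf_pos _ (hr i)).ne' ?_⟩
  simpa [hyy] using h i

end Euclidean

theorem strictAntiOn_exp_neg_mul_div_sq {α : ℝ} (hα : 0 ≤ α) :
    StrictAntiOn (fun r => exp (-α * r) / r ^ 2) (Set.Ioi 0) := by
  intro r hr r' _ hlt
  calc exp (-α * r') / r' ^ 2 < exp (-α * r') / r ^ 2 :=
        div_lt_div_of_pos_left (exp_pos _) (pow_pos hr 2) (pow_lt_pow_left₀ hlt hr.le two_ne_zero)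
    _ ≤ exp (-α * r) / r ^ 2 :=
        div_le_div_of_nonneg_right (exp_le_exp.mpr (by nlinarith)) (sq_nonneg r)

theorem AffineBasis.norm_sub_pos_of_mem_interior_convexHull {ι E : Type*} [Finite ι]
    [Nontrivial ι] [NormedAddCommGroup E] [NormedSpace ℝ E] (b : AffineBasis ι ℝ E) {y : E}
    (hy : y ∈ interior (convexHull ℝ (Set.range b))) (i : ι) : 0 < ‖b i - y‖ := by
  rw [b.interior_convexHull] at hy
  obtain ⟨j, hj⟩ := exists_ne i
  refine norm_pos_iff.mpr (sub_ne_zero.mpr fun hyi => (hy j).ne' ?_)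
  rw [← hyi, b.coord_apply_ne hj]

theorem AffineIndependent.affineSpan_eq_top_of_fin_euclideanSpace {N : ℕ}
    {x : Fin (N + 1) → EuclideanSpace ℝ (Fin N)} (hx : AffineIndependent ℝ x) :
    affineSpan ℝ (Set.range x) = ⊤ := by
  rw [hx.affineSpan_eq_top_iff_card_eq_finrank_add_one, finrank_euclideanSpace_fin,
    Fintype.card_fin]

/-- Uniqueness of the global maximizer of the log-likelihood (Theorem 3, combined
form): with noise-free measurements `s i = A* e^{-α‖x i - y*‖}/‖x i - y*‖²` from a
source `y*` in the open convex hull (interior of the convex hull) of `N + 1` affinely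
independent sensors in `ℝ^N`, and `L(A, y) = ∑ i (s i log (z i(A,y)) - z i(A,y))` with
`z i(A, y) = A e^{-α‖x i - y‖}/‖x i - y‖²`, the pair `(A*, y*)` is the unique global
maximizer of `L` over `(0, ∞) × co{x_1, …, x_{N+1}}`: every `(A, y)` with `A > 0` and
`y` in the open convex hull satisfies `L(A, y) ≤ L(A*, y*)`, and `L(A, y) = L(A*, y*)`
forces `y = y*` and `A = A*`. -/
theorem unique_global_maximizer_loglikelihood {N : ℕ} (hN : 1 ≤ N)
    (x : Fin (N + 1) → EuclideanSpace ℝ (Fin N))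
    (hx : AffineIndependent ℝ x)
    (α Astar : ℝ) (hα : 0 ≤ α) (hAstar : 0 < Astar)
    (ystar : EuclideanSpace ℝ (Fin N))
    (hystar : ystar ∈ interior (convexHull ℝ (Set.range x)))
    (s : Fin (N + 1) → ℝ)
    (hsdef : ∀ i, s i = Astar * exp (-α * ‖x i - ystar‖) / ‖x i - ystar‖ ^ 2)
    (L : ℝ → EuclideanSpace ℝ (Fin N) → ℝ)
    (hLdef : ∀ A w, L A w =
      ∑ i, (s i * log (A * exp (-α * ‖x i - w‖) / ‖x i - w‖ ^ 2)
            - A * exp (-α * ‖x i - w‖) / ‖x i - w‖ ^ 2)) :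
    ∀ A : ℝ, 0 < A → ∀ y ∈ interior (convexHull ℝ (Set.range x)),
      L A y ≤ L Astar ystar ∧ (L A y = L Astar ystar → y = ystar ∧ A = Astar) := by
  intro A hA y hy
  have : Nontrivial (Fin (N + 1)) := Fin.nontrivial_iff_two_le.mpr (by omega)
  let b : AffineBasis (Fin (N + 1)) ℝ (EuclideanSpace ℝ (Fin N)) :=
    ⟨x, hx, hx.affineSpan_eq_top_of_fin_euclideanSpace⟩
  have hr := b.norm_sub_pos_of_mem_interior_convexHull hy
  have hrstar := b.norm_sub_pos_of_mem_interior_convexHull hystar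
  set f := fun r : ℝ => exp (-α * r) / r ^ 2
  have hf_pos : ∀ r, 0 < r → 0 < f r := fun r hr => by positivity
  set z := fun i => A * f ‖x i - y‖
  have hs : ∀ i, s i = Astar * f ‖x i - ystar‖ := fun i => (hsdef i).trans (mul_div_assoc ..)
  have hz_pos : ∀ i, 0 < z i := fun i => mul_pos hA (hf_pos _ (hr i))
  have hs_pos : ∀ i, 0 < s i := fun i => hs i ▸ mul_pos hAstar (hf_pos _ (hrstar i))
  have hLy : L A y = ∑ i, (s i * log (z i) - z i) := by
    simp only [hLdef, z, f, mul_div_assoc]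
  have hLstar : L Astar ystar = ∑ i, (s i * log (s i) - s i) := by
    simp only [hLdef, ← hsdef]
  have hterm : ∀ i ∈ univ, s i * log (z i) - z i ≤ s i * log (s i) - s i :=
    fun i _ => mul_log_sub_le_mul_log_self_sub (hs_pos i) (hz_pos i)
  refine ⟨hLy ▸ hLstar ▸ sum_le_sum hterm, fun hL => ?_⟩
  rw [hLy, hLstar, sum_eq_sum_iff_of_le hterm] at hL
  refine eq_and_eq_of_forall_mul_apply_norm_sub_eq (strictAntiOn_exp_neg_mul_div_sq hα) hf_pos
    (interior_subset hy) (interior_subset hystar) hr hrstar hA hAstar fun i => ?_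
  rw [← hs i]
  exact (mul_log_sub_eq_mul_log_self_sub_iff (hs_pos i) (hz_pos i)).mp (hL i (mem_univ i))
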